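/- Let φ and Φ denote the density and CDF of the standard normal distribution, and define the virtual valuation function ϕ(v) = v - Φ(-v)/φ(v). Then the map v ↦ ϕ⁻¹(-v) + v is 1-Lipschitz on the real line. -/

import Mathlib

/-- The standard normal density. -/
noncomputable def stdPhi (x : ℝ) : ℝ := Real.exp (-x ^ 2 / 2) / Real.sqrt (2 * Real.pi)

/-- The standard normal cumulative distribution function. -/
noncomputable def stdCDF (x : ℝ) : ℝ := ∫ u in Set.Iic x, stdPhi u

/-- The virtual valuation function ϕ(v) = v - Φ(-v)/φ(v). -/
noncomputable def virtualVal (v : ℝ) : ℝ := v - stdCDF (-v) / stdPhi v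

open Real MeasureTheory Filter Set

lemma sqrt2pi_pos : 0 < Real.sqrt (2 * Real.pi) :=
  Real.sqrt_pos.2 (by positivity)

lemma stdPhi_pos (x : ℝ) : 0 < stdPhi x :=
  div_pos (Real.exp_pos _) sqrt2pi_pos

lemma stdPhi_even (x : ℝ) : stdPhi (-x) = stdPhi x := by
  simp [stdPhi, neg_pow]

lemma stdPhi_eq (x : ℝ) : stdPhi x = Real.exp (-(1/2) * x ^ 2) / Real.sqrt (2 * Real.pi) := by
  rw [stdPhi]; ring_nf

lemma integrable_stdPhi : Integrable stdPhi := by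
  have : Integrable (fun x : ℝ => Real.exp (-(1/2) * x ^ 2)) :=
    integrable_exp_neg_mul_sq (by norm_num)
  have h := this.div_const (Real.sqrt (2 * Real.pi))
  exact h.congr (by filter_upwards with x using (stdPhi_eq x).symm)

lemma continuous_stdPhi : Continuous stdPhi := by
  unfold stdPhi; fun_prop

lemma hasDerivAt_stdPhi (x : ℝ) : HasDerivAt stdPhi (-x * stdPhi x) x := by
  have h1 : HasDerivAt (fun x : ℝ => -x ^ 2 / 2) (-x) x := by
    have := ((hasDerivAt_pow 2 x).neg).div_const 2
    simpa using this.congr_deriv (by push_cast; ring)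
  have h2 := (h1.exp).div_const (Real.sqrt (2 * Real.pi))
  exact h2.congr_deriv (by rw [stdPhi]; ring)

lemma integrable_id_mul_stdPhi : Integrable (fun x : ℝ => -x * stdPhi x) := by
  have h1 : Integrable (fun x : ℝ => x * Real.exp (-(1/2) * x ^ 2)) :=
    integrable_mul_exp_neg_mul_sq (by norm_num)
  have h := (h1.div_const (Real.sqrt (2 * Real.pi))).neg
  apply h.congr
  filter_upwards with x
  simp only [Pi.neg_apply]
  rw [stdPhi_eq]
  ring

lemma tendsto_stdPhi_atBot : Tendsto stdPhi atBot (nhds 0) := by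
  have hsq : Tendsto (fun x : ℝ => x ^ 2) atBot atTop := by
    have h0 : Tendsto (fun x : ℝ => (-x) ^ 2) atBot atTop :=
      (tendsto_pow_atTop two_ne_zero).comp tendsto_neg_atBot_atTop
    refine h0.congr fun x => ?_
    ring
  have h1 : Tendsto (fun x : ℝ => -x ^ 2 / 2) atBot atBot := by
    have := tendsto_neg_atTop_atBot.comp (hsq.atTop_div_const (by norm_num : (0:ℝ) < 2))
    refine this.congr fun x => ?_
    simp [Function.comp, neg_div]
  have h2 : Tendsto (fun x : ℝ => Real.exp (-x ^ 2 / 2)) atBot (nhds 0) :=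
    Real.tendsto_exp_atBot.comp h1
  have h3 := h2.div_const (Real.sqrt (2 * Real.pi))
  rw [show stdPhi = fun x => Real.exp (-x ^ 2 / 2) / Real.sqrt (2 * Real.pi) from rfl]
  simpa only [zero_div] using h3

/-- ∫_{-∞}^t (-u φ(u)) du = φ(t). -/
lemma integral_neg_mul_stdPhi (t : ℝ) :
    ∫ u in Set.Iic t, -u * stdPhi u = stdPhi t := by
  have := integral_Iic_of_hasDerivAt_of_tendsto (f := stdPhi)
    (f' := fun u => -u * stdPhi u) (a := t) (m := 0)
    (continuous_stdPhi.continuousWithinAt)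
    (fun x _ => hasDerivAt_stdPhi x)
    (integrable_id_mul_stdPhi.integrableOn)
    tendsto_stdPhi_atBot
  simpa using this

lemma stdCDF_nonneg (x : ℝ) : 0 ≤ stdCDF x :=
  integral_nonneg (fun u => (stdPhi_pos u).le)

/-- Gaussian tail bound: v Φ(-v) ≤ φ(v). -/
lemma tail_bound (v : ℝ) : v * stdCDF (-v) ≤ stdPhi v := by
  rcases le_or_gt v 0 with hv | hv
  · exact (mul_nonpos_of_nonpos_of_nonneg hv (stdCDF_nonneg _)).trans (stdPhi_pos v).le
  · have key : ∫ u in Set.Iic (-v), v * stdPhi u ≤ ∫ u in Set.Iic (-v), -u * stdPhi u := by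
      apply setIntegral_mono_on
      · exact (integrable_stdPhi.integrableOn).const_mul v
      · exact integrable_id_mul_stdPhi.integrableOn
      · exact measurableSet_Iic
      · intro u hu
        have : v ≤ -u := by simp at hu; linarith
        exact mul_le_mul_of_nonneg_right this (stdPhi_pos u).le
    rw [integral_neg_mul_stdPhi, stdPhi_even] at key
    calc v * stdCDF (-v) = ∫ u in Set.Iic (-v), v * stdPhi u := by
          rw [stdCDF, integral_const_mul]
      _ ≤ stdPhi v := key

lemma stdCDF_eq (x : ℝ) : stdCDF x = stdCDF 0 + ∫ u in (0:ℝ)..x, stdPhi u := by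
  have h := intervalIntegral.integral_Iic_sub_Iic
    (integrable_stdPhi.integrableOn (s := Set.Iic 0))
    (integrable_stdPhi.integrableOn (s := Set.Iic x)) (μ := volume)
  rw [stdCDF, stdCDF]
  linarith

lemma hasDerivAt_stdCDF (x : ℝ) : HasDerivAt stdCDF (stdPhi x) x := by
  have h1 : HasDerivAt (fun x => ∫ u in (0:ℝ)..x, stdPhi u) (stdPhi x) x :=
    intervalIntegral.integral_hasDerivAt_right
      (integrable_stdPhi.intervalIntegrable)
      (continuous_stdPhi.stronglyMeasurableAtFilter _ _)
      continuous_stdPhi.continuousAt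
  have h2 := (h1.const_add (stdCDF 0))
  exact h2.congr_of_eventuallyEq (Filter.Eventually.of_forall fun y => stdCDF_eq y)

/-- The Mills-ratio-type function. -/
noncomputable def millsH (v : ℝ) : ℝ := stdCDF (-v) / stdPhi v

lemma hasDerivAt_millsH (v : ℝ) :
    HasDerivAt millsH (v * millsH v - 1) v := by
  have hnum : HasDerivAt (fun v : ℝ => stdCDF (-v)) (-stdPhi (-v)) v := by
    have := (hasDerivAt_stdCDF (-v)).comp v (hasDerivAt_neg v)
    simpa [Function.comp_def] using this
  have hden := hasDerivAt_stdPhi v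
  have hne : stdPhi v ≠ 0 := (stdPhi_pos v).ne'
  have h := hnum.div hden hne
  apply h.congr_deriv
  rw [stdPhi_even, millsH]
  field_simp
  ring

lemma antitone_millsH : Antitone millsH := by
  apply antitone_of_deriv_nonpos
  · exact fun v => (hasDerivAt_millsH v).differentiableAt
  · intro v
    rw [(hasDerivAt_millsH v).deriv]
    have hb := tail_bound v
    have hpos := stdPhi_pos v
    rw [millsH]
    rw [sub_nonpos, mul_div_assoc']
    exact (div_le_one hpos).2 hb

lemma virtualVal_key {x y : ℝ} (hxy : x ≤ y) :
    y - x ≤ virtualVal y - virtualVal x := by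
  have h := antitone_millsH hxy
  simp only [virtualVal]
  have hx : stdCDF (-x) / stdPhi x = millsH x := rfl
  have hy : stdCDF (-y) / stdPhi y = millsH y := rfl
  rw [hx, hy]
  linarith

theorem stmt_3 (ϕinv : ℝ → ℝ)
    (hleft : Function.LeftInverse ϕinv virtualVal)
    (hright : Function.RightInverse ϕinv virtualVal) :
    LipschitzWith 1 (fun v : ℝ => ϕinv (-v) + v) := by
  apply LipschitzWith.of_dist_le_mul
  intro a b
  simp only [Real.dist_eq, NNReal.coe_one, one_mul]
  set x := ϕinv (-a) with hxdef
  set y := ϕinv (-b) with hydef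
  have hx : virtualVal x = -a := hright (-a)
  have hy : virtualVal y = -b := hright (-b)
  rcases le_total x y with hxy | hxy
  · have hk := virtualVal_key hxy
    rw [hx, hy] at hk
    have hab : 0 ≤ a - b := by linarith
    rw [abs_of_nonneg hab, abs_of_nonneg (by linarith : (0:ℝ) ≤ x + a - (y + b))]
    linarith
  · have hk := virtualVal_key hxy
    rw [hx, hy] at hk
    have hab : a - b ≤ 0 := by linarith
    rw [abs_of_nonpos hab, abs_of_nonpos (by linarith : x + a - (y + b) ≤ 0)]
    linarith
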